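/- arXiv:math/0701752 — 5 statements merged into one kernel-verified Lean document; each statement's English description precedes it below -/
import Mathlib

section
/- Let R be a 2×2 integer matrix with trace 0 and determinant -1, say R = [[a,b],[c,-a]], and let P = [[0,1],[1,0]]. If P·R·P = R·P·R and R ≠ P, then R is one of the four matrices [[e,0],[-1,-e]] or [[e,-1],[0,-e]] with e = ±1. -/
/-!
Write `R = [[a, b], [c, -a]]`. Conjugating by `P` swaps both rows and columns, so comparing
the entries of `PRP = RPR` gives `a (b + c + 1) = 0` and `c = b² - a²`, while the determinant
gives `a² + bc = 1`. If `a = 0` then `bc = 1` and `c = b² ≥ 0`, so `b = c = 1`, i.e. `R = P`.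
Otherwise `c = -1 - b` and `a² = b² + b + 1`, which lies strictly between two consecutive squares
unless `b ∈ {0, -1}`; then `a² = 1`.
-/

open Matrix

section SwapConjugation

variable {α : Type*} [NonAssocSemiring α]

theorem swap_mul_mul_swap_fin_two (a b c d : α) :
    !![0, 1; 1, 0] * !![a, b; c, d] * !![0, 1; 1, 0] = !![d, c; b, a] := by
  simp

theorem mul_swap_mul_fin_two (a b c d : α) :
    !![a, b; c, d] * !![0, 1; 1, 0] * !![a, b; c, d] =
      !![b * a + a * c, b * b + a * d; d * a + c * c, d * b + c * d] := by
  simp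

end SwapConjugation

theorem Int.sq_ne_sq_add_self_add_one {a b : ℤ} (hb : 0 < b) : a ^ 2 ≠ b ^ 2 + b + 1 := by
  intro h
  have hlo : |b| < |a| := sq_lt_sq.mp (by nlinarith)
  have hhi : |a| < |b + 1| := sq_lt_sq.mp (by nlinarith)
  rw [abs_of_pos hb] at hlo
  rw [abs_of_pos (by omega : 0 < b + 1)] at hhi
  omega

theorem Int.eq_zero_or_eq_neg_one_of_sq_eq_sq_add_self_add_one {a b : ℤ}
    (h : a ^ 2 = b ^ 2 + b + 1) : b = 0 ∨ b = -1 := by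
  have hpos : ¬0 < b := fun hb ↦ Int.sq_ne_sq_add_self_add_one hb h
  -- `b ↦ -1 - b` fixes `b² + b + 1`
  have hneg : ¬0 < -1 - b := fun hb ↦ Int.sq_ne_sq_add_self_add_one hb (by rw [h]; ring)
  omega

theorem braid_entries_solution {a b c : ℤ} (hdet : a ^ 2 + b * c = 1)
    (hdiag : -a = b * a + a * c) (hoff : c = b ^ 2 - a ^ 2) (hne : ¬(a = 0 ∧ b = 1 ∧ c = 1)) :
    (a = 1 ∨ a = -1) ∧ ((b = 0 ∧ c = -1) ∨ (b = -1 ∧ c = 0)) := by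
  have hfactor : a * (b + c + 1) = 0 := by linarith
  rcases mul_eq_zero.mp hfactor with ha | hbc
  · subst ha
    have hc : 0 ≤ c := by nlinarith
    rcases Int.mul_eq_one_iff_eq_one_or_neg_one.mp (by linarith : b * c = 1) with h | h <;> omega
  · have hc : c = -1 - b := by omega
    subst hc
    rcases Int.eq_zero_or_eq_neg_one_of_sq_eq_sq_add_self_add_one
      (by linarith : a ^ 2 = b ^ 2 + b + 1) with rfl | rfl
    all_goals
      refine ⟨sq_eq_one_iff.mp ?_, by omega⟩
      linarith

/-- If `R = [[a,b],[c,-a]]` has determinant `-1`, `P = [[0,1],[1,0]]`, `PRP = RPR` and `R ≠ P`,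
then `R` is one of the four matrices `[[e,0],[-1,-e]]`, `[[e,-1],[0,-e]]` with `e = ±1`. -/
theorem stmt_2 (a b c : ℤ) (R P : Matrix (Fin 2) (Fin 2) ℤ)
    (hR : R = !![a, b; c, -a]) (hdet : R.det = -1)
    (hP : P = !![0, 1; 1, 0])
    (heq : P * R * P = R * P * R) (hne : R ≠ P) :
    ∃ e : ℤ, (e = 1 ∨ e = -1) ∧ (R = !![e, 0; -1, -e] ∨ R = !![e, -1; 0, -e]) := by
  subst hR hP
  rw [swap_mul_mul_swap_fin_two, mul_swap_mul_fin_two] at heq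
  have hdiag := congrFun₂ heq 0 0
  have hoff := congrFun₂ heq 0 1
  simp only [of_apply, cons_val', cons_val_zero, cons_val_one, empty_val',
    cons_val_fin_one] at hdiag hoff
  rw [det_fin_two_of] at hdet
  have hne' : ¬(a = 0 ∧ b = 1 ∧ c = 1) := by
    rintro ⟨rfl, rfl, rfl⟩
    exact hne (by simp)
  obtain ⟨ha, hbc⟩ := braid_entries_solution (by linarith) hdiag (by linarith) hne'
  refine ⟨a, ha, ?_⟩
  rcases hbc with ⟨rfl, rfl⟩ | ⟨rfl, rfl⟩
  exacts [.inl rfl, .inr rfl]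
end

section
/- Let G be a free abelian group and φ an automorphism of G with φ² = id. If φ acts trivially on G/2G, then there is a basis of G in which φ is diagonal with entries ±1; equivalently, G = G⁺ ⊕ G⁻ where G⁺ = {a : φa = a} and G⁻ = {a : φa = -a}. -/
/-!
A free `ℤ`-module has no `2`-torsion, so the `±1` eigensubgroups of `φ` meet trivially. Writing
`φ a - a = 2 • g` and applying `φ` gives `2 • (φ g + g) = 0`, hence `φ g = -g`, and
`a = (a + g) + (-g)` splits `a` into a fixed and an anti-fixed part.
-/

open LinearMap

section

variable {R M : Type*} [Ring R] [AddCommGroup M] [Module R M]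

theorem mem_ker_sub_one_iff {f : Module.End R M} {x : M} : x ∈ ker (f - 1) ↔ f x = x := by
  rw [mem_ker, LinearMap.sub_apply, Module.End.one_apply, sub_eq_zero]

theorem mem_ker_add_one_iff {f : Module.End R M} {x : M} : x ∈ ker (f + 1) ↔ f x = -x := by
  rw [mem_ker, LinearMap.add_apply, Module.End.one_apply, add_eq_zero_iff_eq_neg]

variable [IsAddTorsionFree M]

theorem disjoint_ker_sub_one_ker_add_one (f : Module.End R M) :
    Disjoint (ker (f - 1)) (ker (f + 1)) := by
  rw [Submodule.disjoint_def]
  intro x hfix hneg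
  exact self_eq_neg.mp ((mem_ker_sub_one_iff.mp hfix).symm.trans (mem_ker_add_one_iff.mp hneg))

theorem codisjoint_ker_sub_one_ker_add_one {f : Module.End R M} (hf : ∀ a, f (f a) = a)
    (hdiv : ∀ a, ∃ g, f a - a = 2 • g) : Codisjoint (ker (f - 1)) (ker (f + 1)) := by
  rw [codisjoint_iff, eq_top_iff]
  intro a _
  obtain ⟨g, hg⟩ := hdiv a
  have hg_neg : f g = -g := by
    refine eq_neg_of_add_eq_zero_left (two_nsmul_eq_zero.mp ?_)
    rw [smul_add, ← map_nsmul, ← hg, map_sub, hf]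
    abel
  have hfa : f a = a + 2 • g := by rw [← hg]; abel
  have hplus : a + g ∈ ker (f - 1) := by
    rw [mem_ker_sub_one_iff, map_add, hfa, hg_neg, two_nsmul]
    abel
  have hminus : -g ∈ ker (f + 1) := by
    rw [mem_ker_add_one_iff, map_neg, hg_neg]
  simpa using Submodule.add_mem_sup hplus hminus

end

/-- An involution of a free abelian group acting trivially modulo doubles is diagonalizable:
`G` is the direct sum of the `+1` and `-1` eigensubgroups. -/
theorem stmt_5 (G : Type*) [AddCommGroup G] [Module ℤ G] [Module.Free ℤ G]
    (φ : G ≃ₗ[ℤ] G) (hinv : ∀ a, φ (φ a) = a)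
    (htriv : ∀ a : G, ∃ g : G, φ a - a = 2 • g) :
    ∃ P N : Submodule ℤ G,
      (∀ a, a ∈ P ↔ φ a = a) ∧ (∀ a, a ∈ N ↔ φ a = -a) ∧ IsCompl P N := by
  have := IsAddTorsionFree.of_isTorsionFree ℤ G
  let f : Module.End ℤ G := φ
  exact ⟨ker (f - 1), ker (f + 1), fun _ => mem_ker_sub_one_iff, fun _ => mem_ker_add_one_iff,
    disjoint_ker_sub_one_ker_add_one f, codisjoint_ker_sub_one_ker_add_one hinv htriv⟩
end

section
/- Let A be a free abelian group with infinite basis, and let φ₁, φ₂ be distinct extremal involutions of A with A⁻_{φᵢ} = ⟨xᵢ⟩ of rank 1 and Bᵢ = A⁺_{φᵢ} of corank 1. If B₁ ≠ B₂ and the product φ₂φ₁ has a fixed-point subgroup of corank 1, then ⟨x₁⟩ = ⟨x₂⟩. -/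
/-- Two distinct extremal involutions with distinct hyperplanes whose product has a fixed-point
subgroup of corank `1` have the same line: `⟨x₁⟩ = ⟨x₂⟩`. -/
theorem stmt_11 (A : Type*) [AddCommGroup A] [Module ℤ A]
    (κ : Type*) (bA : Module.Basis κ ℤ A) (hκ : Infinite κ)
    (φ₁ φ₂ : A ≃ₗ[ℤ] A) (hne : φ₁ ≠ φ₂)
    (h₁ : ∀ a, φ₁ (φ₁ a) = a) (h₂ : ∀ a, φ₂ (φ₂ a) = a)
    (B₁ B₂ : Submodule ℤ A) (x₁ x₂ : A) (hx₁ : x₁ ≠ 0) (hx₂ : x₂ ≠ 0)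
    (hc₁ : IsCompl B₁ (Submodule.span ℤ {x₁})) (hc₂ : IsCompl B₂ (Submodule.span ℤ {x₂}))
    (hfix₁ : ∀ a ∈ B₁, φ₁ a = a) (hfix₂ : ∀ a ∈ B₂, φ₂ a = a)
    (hneg₁ : φ₁ x₁ = -x₁) (hneg₂ : φ₂ x₂ = -x₂)
    (hB : B₁ ≠ B₂)
    (hfp : ∃ y : A, IsCompl (Submodule.span ℤ {y})
      (LinearMap.ker (φ₂.toLinearMap ∘ₗ φ₁.toLinearMap - LinearMap.id))) :
    Submodule.span ℤ {x₁} = Submodule.span ℤ ({x₂} : Set A) := by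
  classical
  haveI : Module.Free ℤ A := Module.Free.of_basis bA
  haveI := bA.isTorsionFree
  -- bridge between `zsmul` and the `Module ℤ A` scalar action
  have bridge := fun (n : ℤ) (x : A) => (Int.cast_smul_eq_zsmul ℤ n x).symm
  simp only [Int.cast_id] at bridge
  -- torsion-freeness (for zsmul)
  have tf : ∀ (m : ℤ) (a : A), m • a = 0 → m = 0 ∨ a = 0 := by
    intro m a h
    rw [bridge] at h
    exact smul_eq_zero.mp h
  -- decomposition along a complement
  have dec : ∀ (B : Submodule ℤ A) (x : A), Codisjoint B (Submodule.span ℤ {x}) →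
      ∀ a : A, ∃ b ∈ B, ∃ c : ℤ, a = b + c • x := by
    intro B x h a
    obtain ⟨b, s, hb, hs, hbs⟩ := Submodule.codisjoint_iff_exists_add_eq.mp h a
    obtain ⟨c, hc⟩ := Submodule.mem_span_singleton.mp hs
    refine ⟨b, hb, c, ?_⟩
    rw [bridge, hc, hbs]
  -- membership of zsmul multiples in span singletons
  have memspan : ∀ (x : A) (c : ℤ), c • x ∈ Submodule.span ℤ {x} := fun x c =>
    zsmul_mem (Submodule.mem_span_singleton_self x) c
  have spanmem : ∀ (x a : A) (c : ℤ), a = c • x → a ∈ Submodule.span ℤ {x} := by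
    intro x a c h
    rw [h]
    exact memspan x c
  -- formula for the involutions
  have phi1 : ∀ b ∈ B₁, ∀ c : ℤ, φ₁ (b + c • x₁) = b - c • x₁ := by
    intro b hb c
    rw [map_add, map_zsmul, hfix₁ b hb, hneg₁, zsmul_neg, sub_eq_add_neg]
  have phi2 : ∀ b ∈ B₂, ∀ c : ℤ, φ₂ (b + c • x₂) = b - c • x₂ := by
    intro b hb c
    rw [map_add, map_zsmul, hfix₂ b hb, hneg₂, zsmul_neg, sub_eq_add_neg]
  -- disjointness facts
  have dis1 : ∀ v ∈ B₁, v ∈ Submodule.span ℤ {x₁} → v = 0 := fun v hv hv' =>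
    (Submodule.disjoint_def.mp hc₁.disjoint) v hv hv'
  have dis2 : ∀ v ∈ B₂, v ∈ Submodule.span ℤ {x₂} → v = 0 := fun v hv hv' =>
    (Submodule.disjoint_def.mp hc₂.disjoint) v hv hv'
  -- Main dichotomy: x₁ and x₂ must be dependent
  by_cases hdep : ∃ m n : ℤ, (m ≠ 0 ∨ n ≠ 0) ∧ m • x₁ = n • x₂
  · obtain ⟨m, n, hmn0, hmn⟩ := hdep
    have hm : m ≠ 0 := by
      intro hm0
      subst hm0
      rw [zero_zsmul] at hmn
      rcases tf n x₂ hmn.symm with hn0 | hx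
      · subst hn0; simp at hmn0
      · exact hx₂ hx
    have hn : n ≠ 0 := by
      intro hn0
      subst hn0
      rw [zero_zsmul] at hmn
      rcases tf m x₁ hmn with hm0 | hx
      · exact hm hm0
      · exact hx₁ hx
    apply le_antisymm
    · rw [Submodule.span_singleton_le_iff_mem]
      obtain ⟨b, hb, c, hbc⟩ := dec B₂ x₂ hc₂.codisjoint x₁
      have e : m • b + (m * c) • x₂ = n • x₂ := by
        rw [mul_zsmul, ← zsmul_add, ← hbc, hmn]
      have hmb : m • b = (n - m * c) • x₂ := by
        rw [sub_zsmul]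
        exact (eq_sub_of_add_eq e).trans (sub_eq_add_neg _ _)
      have hb0 : b = 0 := by
        have h0 : m • b = 0 := dis2 _ (zsmul_mem hb m) (spanmem _ _ _ hmb)
        rcases tf m b h0 with h | h
        · exact absurd h hm
        · exact h
      apply spanmem x₂ x₁ c
      rw [hbc, hb0, zero_add]
    · rw [Submodule.span_singleton_le_iff_mem]
      obtain ⟨b, hb, c, hbc⟩ := dec B₁ x₁ hc₁.codisjoint x₂
      have e : n • b + (n * c) • x₁ = m • x₁ := by
        rw [mul_zsmul, ← zsmul_add, ← hbc, hmn]
      have hmb : n • b = (m - n * c) • x₁ := by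
        rw [sub_zsmul]
        exact (eq_sub_of_add_eq e).trans (sub_eq_add_neg _ _)
      have hb0 : b = 0 := by
        have h0 : n • b = 0 := dis1 _ (zsmul_mem hb n) (spanmem _ _ _ hmb)
        rcases tf n b h0 with h | h
        · exact absurd h hn
        · exact h
      apply spanmem x₁ x₂ c
      rw [hbc, hb0, zero_add]
  · -- independent case: derive a contradiction
    exfalso
    push_neg at hdep
    have indep : ∀ m n : ℤ, m • x₁ = n • x₂ → m = 0 ∧ n = 0 := by
      intro m n h
      by_contra hcon
      rcases not_and_or.mp hcon with h' | h'
      · exact (hdep m n (Or.inl h')) h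
      · exact (hdep m n (Or.inr h')) h
    obtain ⟨y, hy⟩ := hfp
    set K := LinearMap.ker (φ₂.toLinearMap ∘ₗ φ₁.toLinearMap - LinearMap.id) with hK
    have memK : ∀ a : A, a ∈ K ↔ φ₂ (φ₁ a) = a := by
      intro a
      rw [hK, LinearMap.mem_ker, LinearMap.sub_apply, LinearMap.comp_apply,
        LinearMap.id_apply, LinearEquiv.coe_coe, LinearEquiv.coe_coe, sub_eq_zero]
    -- K = B₁ ⊓ B₂
    have K_le : ∀ a ∈ K, a ∈ B₁ ∧ a ∈ B₂ := by
      intro a ha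
      obtain ⟨b, hb, c, hbc⟩ := dec B₁ x₁ hc₁.codisjoint a
      have hφ₁a : φ₁ a = b - c • x₁ := by rw [hbc]; exact phi1 b hb c
      obtain ⟨b', hb', d, hbd⟩ := dec B₂ x₂ hc₂.codisjoint (φ₁ a)
      have hφ₂ : φ₂ (φ₁ a) = b' - d • x₂ := by rw [hbd]; exact phi2 b' hb' d
      have hfixa : φ₂ (φ₁ a) = a := (memK a).mp ha
      have e1 : b' - d • x₂ = a := by rw [← hφ₂, hfixa]
      have e2 : b' + d • x₂ = b - c • x₁ := by rw [← hbd, hφ₁a]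
      have hb'eq : b' = a + d • x₂ := sub_eq_iff_eq_add.mp e1
      have hbval : b = a - c • x₁ := by rw [hbc]; abel
      have e2' : (a + d • x₂) + d • x₂ = (a - c • x₁) - c • x₁ := by
        rw [← hb'eq, ← hbval]; exact e2
      have e4 : c • x₁ + c • x₁ + (d • x₂ + d • x₂)
          = ((a + d • x₂) + d • x₂) - ((a - c • x₁) - c • x₁) := by abel
      rw [e2', sub_self] at e4
      have key : (2 * c) • x₁ = (-(2 * d)) • x₂ := by
        rw [two_mul, add_zsmul, neg_zsmul, two_mul, add_zsmul, eq_neg_iff_add_eq_zero]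
        rw [← e4]
      obtain ⟨hc0, hd0⟩ := indep _ _ key
      have hc0' : c = 0 := by omega
      have hd0' : d = 0 := by omega
      have haB1 : a = b := by rw [hbc, hc0', zero_zsmul, add_zero]
      have hfx : φ₁ a = a := by rw [hφ₁a, hc0', zero_zsmul, sub_zero, haB1]
      constructor
      · rw [haB1]; exact hb
      · have : a = b' := by rw [← hfx, hbd, hd0', zero_zsmul, add_zero]
        rw [this]; exact hb'
    have decY : ∀ a : A, ∃ m : ℤ, ∃ k ∈ K, a = m • y + k := by
      intro a
      obtain ⟨s, k, hs, hk, hsk⟩ := Submodule.codisjoint_iff_exists_add_eq.mp hy.codisjoint a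
      obtain ⟨m, hm⟩ := Submodule.mem_span_singleton.mp hs
      refine ⟨m, k, hk, ?_⟩
      rw [bridge, hm, hsk]
    obtain ⟨by₁, hby₁, p, hyp⟩ := dec B₁ x₁ hc₁.codisjoint y
    have hp : p ≠ 0 := by
      intro hp0
      have hyB1 : y ∈ B₁ := by
        rw [hyp, hp0, zero_zsmul, add_zero]; exact hby₁
      obtain ⟨m, k, hk, hmk⟩ := decY x₁
      have hx1B : x₁ ∈ B₁ := by
        rw [hmk]
        exact Submodule.add_mem _ (zsmul_mem hyB1 m) (K_le k hk).1
      exact hx₁ (dis1 x₁ hx1B (Submodule.mem_span_singleton_self x₁))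
    have hB12 : ∀ {a}, a ∈ B₁ → a ∈ B₂ := by
      intro a ha
      obtain ⟨m, k, hk, hmk⟩ := decY a
      have hmy : m • y ∈ B₁ := by
        have hmyk : m • y = a - k := by rw [hmk]; abel
        rw [hmyk]
        exact Submodule.sub_mem _ ha (K_le k hk).1
      have hmpx : (m * p) • x₁ = m • y - m • by₁ := by
        rw [hyp, zsmul_add, ← mul_zsmul]; abel
      have h0 : (m * p) • x₁ = 0 := by
        apply dis1
        · rw [hmpx]
          exact Submodule.sub_mem _ hmy (zsmul_mem hby₁ m)
        · exact memspan x₁ (m * p)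
      have hm0 : m = 0 := by
        rcases tf _ _ h0 with h | h
        · rcases mul_eq_zero.mp h with h | h
          · exact h
          · exact absurd h hp
        · exact absurd h hx₁
      have hak : a = k := by rw [hmk, hm0, zero_zsmul, zero_add]
      rw [hak]
      exact (K_le k hk).2
    obtain ⟨by₂, hby₂, q, hyq⟩ := dec B₂ x₂ hc₂.codisjoint y
    have hq : q ≠ 0 := by
      intro hq0
      have hyB2 : y ∈ B₂ := by
        rw [hyq, hq0, zero_zsmul, add_zero]; exact hby₂
      obtain ⟨m, k, hk, hmk⟩ := decY x₂
      have hx2B : x₂ ∈ B₂ := by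
        rw [hmk]
        exact Submodule.add_mem _ (zsmul_mem hyB2 m) (K_le k hk).2
      exact hx₂ (dis2 x₂ hx2B (Submodule.mem_span_singleton_self x₂))
    have hB21 : ∀ {a}, a ∈ B₂ → a ∈ B₁ := by
      intro a ha
      obtain ⟨m, k, hk, hmk⟩ := decY a
      have hmy : m • y ∈ B₂ := by
        have hmyk : m • y = a - k := by rw [hmk]; abel
        rw [hmyk]
        exact Submodule.sub_mem _ ha (K_le k hk).2
      have hmpx : (m * q) • x₂ = m • y - m • by₂ := by
        rw [hyq, zsmul_add, ← mul_zsmul]; abel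
      have h0 : (m * q) • x₂ = 0 := by
        apply dis2
        · rw [hmpx]
          exact Submodule.sub_mem _ hmy (zsmul_mem hby₂ m)
        · exact memspan x₂ (m * q)
      have hm0 : m = 0 := by
        rcases tf _ _ h0 with h | h
        · rcases mul_eq_zero.mp h with h | h
          · exact h
          · exact absurd h hq
        · exact absurd h hx₂
      have hak : a = k := by rw [hmk, hm0, zero_zsmul, zero_add]
      rw [hak]
      exact (K_le k hk).1
    exact hB (le_antisymm (fun a ha => hB12 ha) (fun a ha => hB21 ha))
end

section
/- Let A be a free abelian group, φ₁, φ₂ extremal involutions with the same hyperplane B = A⁺_{φ₁} = A⁺_{φ₂} but distinct lines ⟨x₁⟩ ≠ ⟨x₂⟩ (where ⟨xᵢ⟩ = A⁻_{φᵢ}). Then the product φ₂φ₁ is a 2m-transvection for some nonzero natural number m. -/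
/-- An element of a module is unimodular (primitive) if it is a member of some basis. -/
def IsUnimodular {A : Type*} [AddCommGroup A] [Module ℤ A] (x : A) : Prop :=
  ∃ (s : Set A) (b : Module.Basis s ℤ A) (i : s), b i = x

/-- `σ` is a `w`-transvection: `σ(a) = a + δ(a)·x` for a nonzero `δ : A → ℤ` whose kernel is a
direct summand of corank `1`, `x ∈ ker δ` unimodular, and `|δ(y)| = w` for a complement
generator `y` of `ker δ`. -/
def IsTransvectionOfWeight {A : Type*} [AddCommGroup A] [Module ℤ A] (σ : A → A) (w : ℕ) : Prop :=
  ∃ (δ : A →ₗ[ℤ] ℤ) (x y : A), δ ≠ 0 ∧ x ∈ LinearMap.ker δ ∧ IsUnimodular x ∧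
    IsCompl (Submodule.span ℤ {y}) (LinearMap.ker δ) ∧
    (∀ a, σ a = a + δ a • x) ∧ (δ y).natAbs = w

lemma isUnimodular_of_basis {A : Type*} [AddCommGroup A] [Module ℤ A]
    {ι : Type*} (b : Module.Basis ι ℤ A) (i : ι) : IsUnimodular (b i) :=
  ⟨Set.range b, b.reindexRange, ⟨b i, Set.mem_range_self i⟩, b.reindexRange_self i⟩

/-- In a finite free ℤ-module, every nonzero element is a nonzero multiple of a basis vector
of some basis. -/
lemma exists_basis_smul_fin {M : Type*} [AddCommGroup M] [Module ℤ M] {ι : Type*} [Finite ι]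
    (b : Module.Basis ι ℤ M) (v : M) (hv : v ≠ 0) :
    ∃ (d : ℤ) (b' : Module.Basis ι ℤ M) (i : ι), d ≠ 0 ∧ v = d • b' i := by
  classical
  have hinst := (AddCommGroup.uniqueIntModule (M := M)).uniq ‹Module ℤ M›
  subst hinst
  obtain ⟨n, ⟨bM, bN, f, a, hsnf⟩⟩ := (Submodule.span ℤ ({v} : Set M)).smithNormalForm b
  have hvN : v ∈ Submodule.span ℤ ({v} : Set M) := Submodule.mem_span_singleton_self v
  have hn : 0 < n := by
    rcases Nat.eq_zero_or_pos n with h | h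
    · exfalso
      subst h
      have h0 := bN.sum_repr ⟨v, hvN⟩
      simp only [Finset.univ_eq_empty, Finset.sum_empty] at h0
      exact hv (by simpa [Subtype.ext_iff, eq_comm] using h0)
    · exact h
  set i : Fin n := ⟨0, hn⟩ with hi
  have hk : ∀ j : Fin n, ∃ k : ℤ, k • v = ((bN j : _) : M) := fun j =>
    Submodule.mem_span_singleton.mp (bN j).2
  choose k hkk using hk
  have hkne : ∀ j : Fin n, k j ≠ 0 := by
    intro j hj
    apply bN.ne_zero j
    have : ((bN j : _) : M) = 0 := by rw [← hkk j, hj, zero_smul]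
    exact Subtype.ext this
  haveI : Subsingleton (Fin n) := by
    constructor
    intro j j'
    by_contra hjj
    have heq : (k j') • bN j = (k j) • bN j' := by
      apply Subtype.ext
      push_cast
      rw [← hkk j, ← hkk j', smul_smul, smul_smul, mul_comm]
    have h2 : k j' = 0 := by
      simpa [Module.Basis.repr_self, Finsupp.single_apply, Ne.symm hjj] using
        congrArg (fun z => bN.repr z j) heq
    exact hkne j' h2
  set t : ℤ := bN.repr ⟨v, hvN⟩ i with ht
  have hrep : (t • bN i : _) = (⟨v, hvN⟩ : Submodule.span ℤ ({v} : Set M)) := by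
    have h3 := bN.sum_repr ⟨v, hvN⟩
    rwa [Fintype.sum_eq_single i (fun j hj => absurd (Subsingleton.elim j i) hj)] at h3
  have hveq : v = (t * a i) • bM (f i) := by
    have h4 := congrArg (fun z : Submodule.span ℤ ({v} : Set M) => (z : M)) hrep
    simp only [Submodule.coe_smul_of_tower] at h4
    rw [← h4, hsnf i, smul_smul]
  refine ⟨t * a i, bM, f i, ?_, hveq⟩
  intro h0
  rw [h0, zero_smul] at hveq
  exact hv hveq

/-- In a free ℤ-module, every nonzero element is a nonzero multiple of a unimodular element. -/
lemma exists_unimodular_smul {A : Type*} [AddCommGroup A] [Module ℤ A]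
    {κ : Type*} (bA : Module.Basis κ ℤ A) (b : A) (hb : b ≠ 0) :
    ∃ (d : ℤ) (u : A), d ≠ 0 ∧ b = d • u ∧ IsUnimodular u := by
  classical
  have hinst := (AddCommGroup.uniqueIntModule (M := A)).uniq ‹Module ℤ A›
  subst hinst
  set S : Finset κ := (bA.repr b).support with hS
  let e : κ ≃ {x // x ∈ S} ⊕ {x // ¬ x ∈ S} := (Equiv.sumCompl (· ∈ S)).symm
  let F : A ≃ₗ[ℤ] ({x // x ∈ S} →₀ ℤ) × ({x // ¬ x ∈ S} →₀ ℤ) :=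
    bA.repr ≪≫ₗ (Finsupp.domLCongr e : (κ →₀ ℤ) ≃ₗ[ℤ] (({x // x ∈ S} ⊕ {x // ¬ x ∈ S}) →₀ ℤ))
      ≪≫ₗ (Finsupp.sumFinsuppLEquivProdFinsupp ℤ)
  have hF2 : (F b).2 = 0 := by
    ext j
    have hj : (F b).2 j = (bA.repr b) j := by
      simp only [F, LinearEquiv.trans_apply, Finsupp.snd_sumFinsuppLEquivProdFinsupp,
        Finsupp.domLCongr_apply, Finsupp.equivMapDomain_apply]
      rfl
    rw [hj]
    exact Finsupp.notMem_support_iff.mp j.2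
  have hv : (F b).1 ≠ 0 := by
    intro h
    apply hb
    have : F b = 0 := Prod.ext h hF2
    exact (map_eq_zero_iff F F.injective).mp this
  obtain ⟨d, b', i, hd, hvd⟩ :=
    exists_basis_smul_fin (Finsupp.basisSingleOne : Module.Basis {x // x ∈ S} ℤ _) (F b).1 hv
  let bc : Module.Basis {x // ¬ x ∈ S} ℤ ({x // ¬ x ∈ S} →₀ ℤ) := Finsupp.basisSingleOne
  let bb : Module.Basis ({x // x ∈ S} ⊕ {x // ¬ x ∈ S}) ℤ A := (b'.prod bc).map F.symm
  refine ⟨d, bb (Sum.inl i), hd, ?_, isUnimodular_of_basis bb _⟩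
  have hbb : bb (Sum.inl i) = F.symm (b' i, 0) := by
    show F.symm ((b'.prod bc) (Sum.inl i)) = F.symm (b' i, 0)
    congr 1
    exact Prod.ext (b'.prod_apply_inl_fst bc i) (b'.prod_apply_inl_snd bc i)
  rw [hbb, ← map_smul]
  have : d • ((b' i : {x // x ∈ S} →₀ ℤ), (0 : {x // ¬ x ∈ S} →₀ ℤ)) = F b := by
    apply Prod.ext
    · simp [← hvd]
    · simp [hF2]
  rw [this, F.symm_apply_apply]

/-- The product of two extremal involutions with the same hyperplane `B` but distinct lines
`⟨x₁⟩ ≠ ⟨x₂⟩` is a `2m`-transvection for some nonzero natural `m`. -/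
theorem stmt_12 (A : Type*) [AddCommGroup A] [Module ℤ A]
    (κ : Type*) (bA : Module.Basis κ ℤ A) (hκ : Infinite κ)
    (φ₁ φ₂ : A ≃ₗ[ℤ] A)
    (h₁ : ∀ a, φ₁ (φ₁ a) = a) (h₂ : ∀ a, φ₂ (φ₂ a) = a)
    (B : Submodule ℤ A) (x₁ x₂ : A) (hx₁ : x₁ ≠ 0) (hx₂ : x₂ ≠ 0)
    (hc₁ : IsCompl B (Submodule.span ℤ {x₁})) (hc₂ : IsCompl B (Submodule.span ℤ {x₂}))
    (hfix₁ : ∀ a ∈ B, φ₁ a = a) (hfix₂ : ∀ a ∈ B, φ₂ a = a)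
    (hneg₁ : φ₁ x₁ = -x₁) (hneg₂ : φ₂ x₂ = -x₂)
    (hlines : Submodule.span ℤ {x₁} ≠ Submodule.span ℤ ({x₂} : Set A)) :
    ∃ m : ℕ, m ≠ 0 ∧ IsTransvectionOfWeight (fun a => φ₂ (φ₁ a)) (2 * m) := by
  classical
  have hinst := (AddCommGroup.uniqueIntModule (M := A)).uniq ‹Module ℤ A›
  subst hinst
  haveI : Module.IsTorsionFree ℤ A := bA.isTorsionFree
  -- coordinate functionals along x₁ resp. x₂, with kernel B
  let π₁ := (Submodule.span ℤ ({x₁} : Set A)).linearProjOfIsCompl B hc₁.symm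
  let π₂ := (Submodule.span ℤ ({x₂} : Set A)).linearProjOfIsCompl B hc₂.symm
  let δ₁ : A →ₗ[ℤ] ℤ := (LinearEquiv.coord ℤ A x₁ hx₁).toLinearMap ∘ₗ π₁
  let δ₂ : A →ₗ[ℤ] ℤ := (LinearEquiv.coord ℤ A x₂ hx₂).toLinearMap ∘ₗ π₂
  have hπ₁ : ∀ z, δ₁ z • x₁ = (π₁ z : A) := fun z =>
    LinearEquiv.coord_apply_smul ℤ A x₁ hx₁ (π₁ z)
  have hπ₂ : ∀ z, δ₂ z • x₂ = (π₂ z : A) := fun z =>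
    LinearEquiv.coord_apply_smul ℤ A x₂ hx₂ (π₂ z)
  -- the B-component
  have hB₁ : ∀ z, z - δ₁ z • x₁ ∈ B := by
    intro z
    have h := Submodule.projection_add_projection_eq_self hc₁.symm z
    have h2 : z - δ₁ z • x₁ =
        ((B.linearProjOfIsCompl (Submodule.span ℤ ({x₁} : Set A)) hc₁.symm.symm) z : A) := by
      rw [hπ₁ z]; exact sub_eq_of_eq_add' h.symm
    rw [h2]
    exact ((B.linearProjOfIsCompl _ hc₁.symm.symm) z).2
  have hB₂ : ∀ z, z - δ₂ z • x₂ ∈ B := by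
    intro z
    have h := Submodule.projection_add_projection_eq_self hc₂.symm z
    have h2 : z - δ₂ z • x₂ =
        ((B.linearProjOfIsCompl (Submodule.span ℤ ({x₂} : Set A)) hc₂.symm.symm) z : A) := by
      rw [hπ₂ z]; exact sub_eq_of_eq_add' h.symm
    rw [h2]
    exact ((B.linearProjOfIsCompl _ hc₂.symm.symm) z).2
  have hker₁ : ∀ z ∈ B, δ₁ z = 0 := by
    intro z hz
    have : π₁ z = 0 := Submodule.projectionOnto_apply_of_mem_right hc₁.symm hz
    simp only [δ₁, LinearMap.comp_apply, this, map_zero]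
  have hker₂ : ∀ z ∈ B, δ₂ z = 0 := by
    intro z hz
    have : π₂ z = 0 := Submodule.projectionOnto_apply_of_mem_right hc₂.symm hz
    simp only [δ₂, LinearMap.comp_apply, this, map_zero]
  have hδ₁x₁ : δ₁ x₁ = 1 := by
    have h1 : π₁ x₁ = ⟨x₁, Submodule.mem_span_singleton_self x₁⟩ :=
      Submodule.linearProjOfIsCompl_apply_left hc₁.symm ⟨x₁, Submodule.mem_span_singleton_self x₁⟩
    show (LinearEquiv.coord ℤ A x₁ hx₁) (π₁ x₁) = 1
    rw [h1]
    exact LinearEquiv.coord_self ℤ A x₁ hx₁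
  have hδ₂x₂ : δ₂ x₂ = 1 := by
    have h1 : π₂ x₂ = ⟨x₂, Submodule.mem_span_singleton_self x₂⟩ :=
      Submodule.linearProjOfIsCompl_apply_left hc₂.symm ⟨x₂, Submodule.mem_span_singleton_self x₂⟩
    show (LinearEquiv.coord ℤ A x₂ hx₂) (π₂ x₂) = 1
    rw [h1]
    exact LinearEquiv.coord_self ℤ A x₂ hx₂
  have hzero₁ : ∀ z, δ₁ z = 0 → z ∈ B := by
    intro z hz
    have h := hB₁ z
    rwa [hz, zero_smul, sub_zero] at h
  -- proportionality of the two functionals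
  have hprop : ∀ z, δ₂ z = δ₂ x₁ * δ₁ z := by
    intro z
    have h0 := hker₂ _ (hB₁ z)
    rw [map_sub, map_zsmul, sub_eq_zero] at h0
    rw [h0]
    have : δ₁ z • δ₂ x₁ = δ₁ z * δ₂ x₁ := smul_eq_mul _ _
    rw [this]; ring
  have hprop' : ∀ z, δ₁ z = δ₁ x₂ * δ₂ z := by
    intro z
    have h0 := hker₁ _ (hB₂ z)
    rw [map_sub, map_zsmul, sub_eq_zero] at h0
    rw [h0]
    have : δ₂ z • δ₁ x₂ = δ₂ z * δ₁ x₂ := smul_eq_mul _ _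
    rw [this]; ring
  set c : ℤ := δ₁ x₂ with hc
  set c' : ℤ := δ₂ x₁ with hc'
  have hcc : c * c' = 1 := by
    have h5 := hprop' x₁
    rw [hδ₁x₁] at h5
    exact h5.symm
  -- the involutions as explicit maps
  have hφ₁ : ∀ z, φ₁ z = z - (2 * δ₁ z) • x₁ := by
    intro z
    have hdec : z = (z - δ₁ z • x₁) + δ₁ z • x₁ := by abel
    calc φ₁ z = φ₁ ((z - δ₁ z • x₁) + δ₁ z • x₁) := by rw [← hdec]
    _ = φ₁ (z - δ₁ z • x₁) + δ₁ z • φ₁ x₁ := by rw [map_add, map_smul]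
    _ = (z - δ₁ z • x₁) + δ₁ z • (-x₁) := by rw [hfix₁ _ (hB₁ z), hneg₁]
    _ = z - (2 * δ₁ z) • x₁ := by
        rw [smul_neg, mul_smul, two_smul]; abel
  have hφ₂ : ∀ z, φ₂ z = z - (2 * δ₂ z) • x₂ := by
    intro z
    have hdec : z = (z - δ₂ z • x₂) + δ₂ z • x₂ := by abel
    calc φ₂ z = φ₂ ((z - δ₂ z • x₂) + δ₂ z • x₂) := by rw [← hdec]
    _ = φ₂ (z - δ₂ z • x₂) + δ₂ z • φ₂ x₂ := by rw [map_add, map_smul]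
    _ = (z - δ₂ z • x₂) + δ₂ z • (-x₂) := by rw [hfix₂ _ (hB₂ z), hneg₂]
    _ = z - (2 * δ₂ z) • x₂ := by
        rw [smul_neg, mul_smul, two_smul]; abel
  -- the product is a translation-by-functional map
  set w : A := c' • x₂ - x₁ with hwdef
  have hσ : ∀ a, φ₂ (φ₁ a) = a + (2 * δ₁ a) • w := by
    intro a
    rw [hφ₁ a, hφ₂ _]
    have hδ₂φ : δ₂ (a - (2 * δ₁ a) • x₁) = -(c' * δ₁ a) := by
      rw [map_sub, map_smul, smul_eq_mul, hprop a, ← hc']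
      ring
    rw [hδ₂φ, hwdef]
    have : (2 * -(c' * δ₁ a)) • x₂ = (-(2 * δ₁ a) * c') • x₂ := by ring_nf
    rw [this]
    rw [neg_mul, neg_smul, mul_smul, sub_neg_eq_add, smul_smul]
    rw [smul_sub]
    rw [mul_comm (2 * δ₁ a) c', ← mul_smul, mul_comm c' (2 * δ₁ a), mul_smul]
    abel
  -- w is nonzero and lies in B
  have hδ₁w : δ₁ w = 0 := by
    rw [hwdef, map_sub, map_smul, smul_eq_mul, ← hc, hδ₁x₁]
    have : c' * c = 1 := by rw [mul_comm]; exact hcc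
    omega
  have hwne : w ≠ 0 := by
    intro hw0
    apply hlines
    have hx12 : x₁ = c' • x₂ := by
      have : c' • x₂ - x₁ = 0 := hw0
      have h' := sub_eq_zero.mp this
      exact h'.symm
    have hx21 : x₂ = c • x₁ := by
      rw [hx12, smul_smul, hcc, one_smul]
    apply le_antisymm
    · rw [Submodule.span_singleton_le_iff_mem, hx12]
      exact Submodule.smul_mem _ _ (Submodule.mem_span_singleton_self x₂)
    · rw [Submodule.span_singleton_le_iff_mem, hx21]
      exact Submodule.smul_mem _ _ (Submodule.mem_span_singleton_self x₁)
  -- extract the primitive part of w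
  obtain ⟨d, u, hd, hwu, hu⟩ := exists_unimodular_smul bA w hwne
  refine ⟨d.natAbs, by simpa using hd, (2 * d) • δ₁, u, x₁, ?_, ?_, hu, ?_, ?_, ?_⟩
  · -- δ ≠ 0
    intro h0
    have h6 := congrArg (fun f : A →ₗ[ℤ] ℤ => f x₁) h0
    simp only [LinearMap.smul_apply, smul_eq_mul, hδ₁x₁, mul_one, LinearMap.zero_apply] at h6
    exact hd (by omega)
  · -- u ∈ ker
    have : d * δ₁ u = 0 := by
      have h7 := hδ₁w
      rw [hwu, map_zsmul] at h7
      rw [← h7]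
      exact (smul_eq_mul _ _).symm
    have hδu : δ₁ u = 0 := by
      rcases mul_eq_zero.mp this with h | h
      · exact absurd h hd
      · exact h
    simp [LinearMap.mem_ker, hδu]
  · -- IsCompl
    have hkereq : LinearMap.ker ((2 * d) • δ₁) = B := by
      ext z
      simp only [LinearMap.mem_ker, LinearMap.smul_apply, smul_eq_mul]
      constructor
      · intro h
        rcases mul_eq_zero.mp h with h | h
        · exact absurd h (by simpa using (by simpa using hd : d ≠ 0) |> fun hh => by omega)
        · exact hzero₁ z h
      · intro hz
        rw [hker₁ z hz, mul_zero]
    rw [hkereq]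
    exact hc₁.symm
  · -- the transvection formula
    intro a
    show φ₂ (φ₁ a) = a + ((2 * d) • δ₁) a • u
    rw [hσ a]
    congr 1
    rw [hwu, smul_smul, LinearMap.smul_apply]
    have h8 : (2 * d) • δ₁ a = 2 * d * δ₁ a := smul_eq_mul _ _
    rw [h8]
    congr 1
    ring
  · -- the weight
    rw [LinearMap.smul_apply, smul_eq_mul, hδ₁x₁, mul_one, Int.natAbs_mul]
    norm_num
end

section
/- Let A be a free abelian group, φ₁, φ₂ extremal involutions with distinct hyperplanes B₁ ≠ B₂ (Bᵢ = A⁺_{φᵢ}) but the same line ⟨x₁⟩ = ⟨x₂⟩ = A⁻_{φ₁} = A⁻_{φ₂}. Then φ₂φ₁ is a 2m-transvection for some m ≥ 1, or the identity. -/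
section Helpers

variable {R : Type*} [CommRing R] {M : Type*} [AddCommGroup M] [Module R M]

/-- Combine bases of two complementary submodules into a basis of the whole module. -/
noncomputable def basisOfIsCompl {p q : Submodule R M} (h : IsCompl p q) {ιp ιq : Type*}
    (bp : Module.Basis ιp R p) (bq : Module.Basis ιq R q) : Module.Basis (ιp ⊕ ιq) R M :=
  (bp.prod bq).map (Submodule.prodEquivOfIsCompl p q h)

theorem basisOfIsCompl_apply_inl {p q : Submodule R M} (h : IsCompl p q) {ιp ιq : Type*}
    (bp : Module.Basis ιp R p) (bq : Module.Basis ιq R q) (i : ιp) :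
    basisOfIsCompl h bp bq (Sum.inl i) = (bp i : M) := by
  simp [basisOfIsCompl, Module.Basis.prod_apply, Submodule.coe_prodEquivOfIsCompl']

/-- If a linear functional takes value `1` at `x`, then `x` is a member of a basis. -/
theorem exists_basis_mem [IsDomain R] [IsPrincipalIdealRing R]
    {ι : Type*} (b : Module.Basis ι R M) (f : M →ₗ[R] R) (x : M) (hfx : f x = 1) :
    ∃ (s : Set M) (bs : Module.Basis s R M) (i : s), bs i = x := by
  classical
  set S : Set ι := ((b.repr x).support : Set ι) with hS
  set M₁ : Submodule R M := Submodule.span R (b '' S) with hM₁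
  set M₂ : Submodule R M := Submodule.span R (b '' Sᶜ) with hM₂
  have hxM₁ : x ∈ M₁ := b.mem_span_repr_support x
  have hcompl : IsCompl M₁ M₂ := by
    constructor
    · exact b.linearIndependent.disjoint_span_image disjoint_compl_right
    · rw [codisjoint_iff, hM₁, hM₂, ← Submodule.span_union, ← Set.image_union,
        Set.union_compl_self, Set.image_univ, b.span_eq]
  have li₁ : LinearIndependent R (fun i : S => b i) :=
    b.linearIndependent.comp _ Subtype.val_injective
  have li₂ : LinearIndependent R (fun i : ↥(Sᶜ) => b i) :=
    b.linearIndependent.comp _ Subtype.val_injective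
  have hr₁ : Submodule.span R (Set.range fun i : S => b i) = M₁ := by
    rw [hM₁]; congr 1; rw [← Set.image_eq_range]
  have hr₂ : Submodule.span R (Set.range fun i : ↥(Sᶜ) => b i) = M₂ := by
    rw [hM₂]; congr 1; rw [← Set.image_eq_range]
  let b₁ : Module.Basis S R M₁ := (Module.Basis.span li₁).map (LinearEquiv.ofEq _ _ hr₁)
  let b₂ : Module.Basis ↥(Sᶜ) R M₂ := (Module.Basis.span li₂).map (LinearEquiv.ofEq _ _ hr₂)
  haveI : Finite S := by rw [hS]; exact (Finset.finite_toSet _)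
  set x' : M₁ := ⟨x, hxM₁⟩ with hx'
  set f' : M₁ →ₗ[R] R := f.comp M₁.subtype with hf'
  have hf'x : f' x' = 1 := hfx
  have hx'0 : x' ≠ 0 := by
    intro h0
    rw [h0, map_zero] at hf'x
    exact zero_ne_one (α := R) hf'x
  obtain ⟨n, bK⟩ := Submodule.basisOfPid b₁ (LinearMap.ker f')
  have hcompl' : IsCompl (Submodule.span R {x'}) (LinearMap.ker f') := by
    constructor
    · rw [disjoint_iff]
      ext a
      simp only [Submodule.mem_inf, Submodule.mem_bot, Submodule.mem_span_singleton,
        LinearMap.mem_ker]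
      constructor
      · rintro ⟨⟨k, rfl⟩, hk⟩
        rw [map_smul, hf'x, smul_eq_mul, mul_one] at hk
        simp [hk]
      · rintro rfl; exact ⟨⟨0, by simp⟩, map_zero _⟩
    · rw [codisjoint_iff, eq_top_iff]
      intro a _
      rw [Submodule.mem_sup]
      refine ⟨f' a • x', Submodule.smul_mem _ _ (Submodule.mem_span_singleton_self _),
        a - f' a • x', ?_, by abel⟩
      simp [LinearMap.mem_ker, hf'x, mul_comm]
  haveI : NoZeroSMulDivisors R M₁ := by
    constructor
    intro c a hca
    rcases eq_or_ne c 0 with h | h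
    · exact Or.inl h
    · refine Or.inr ?_
      have : (c • a : M) = 0 := by exact_mod_cast congrArg Subtype.val hca
      have := b.smul_eq_zero.1 this
      rcases this with h' | h'
      · exact absurd h' h
      · exact Subtype.ext h'
  let bx : Module.Basis Unit R (Submodule.span R {x'}) :=
    (Module.Basis.singleton Unit R).map (LinearEquiv.toSpanNonzeroSingleton R M₁ x' hx'0)
  have hbx : (bx () : M₁) = x' := by
    simp [bx, Module.Basis.singleton_apply]
  let b₁' := basisOfIsCompl hcompl' bx bK
  have hb₁' : (b₁' (Sum.inl ()) : M₁) = x' := by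
    rw [show b₁' (Sum.inl ()) = (bx () : M₁) from basisOfIsCompl_apply_inl _ _ _ _, hbx]
  let bM := basisOfIsCompl hcompl b₁' b₂
  have hbM : bM (Sum.inl (Sum.inl ())) = x := by
    rw [show bM (Sum.inl (Sum.inl ())) = (b₁' (Sum.inl ()) : M) from
      basisOfIsCompl_apply_inl _ _ _ _, hb₁']
  refine ⟨Set.range bM, bM.reindexRange, ⟨x, ⟨Sum.inl (Sum.inl ()), hbM⟩⟩, ?_⟩
  have := bM.reindexRange_apply (⟨x, ⟨Sum.inl (Sum.inl ()), hbM⟩⟩ : Set.range bM)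
  exact this

end Helpers

/-- The explicit formula for an extremal involution. -/
theorem involution_formula {R : Type*} [CommRing R] [IsDomain R] {A : Type*} [AddCommGroup A] [Module R A]
    [NoZeroSMulDivisors R A]
    (φ : A ≃ₗ[R] A) (B : Submodule R A) (x : A) (hx : x ≠ 0)
    (hc : IsCompl B (Submodule.span R {x}))
    (hfix : ∀ a ∈ B, φ a = a) (hneg : φ x = -x) :
    ∃ δ : A →ₗ[R] R, δ x = 1 ∧ (∀ a ∈ B, δ a = 0) ∧
      ∀ a, φ a = a - (2 * δ a) • x := by
  set p := Submodule.span R ({x} : Set A) with hp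
  have hxp : x ∈ p := Submodule.mem_span_singleton_self x
  set proj := Submodule.projectionOnto p B hc.symm with hproj
  set e := LinearEquiv.toSpanNonzeroSingleton R A x hx with he
  set δ := e.symm.toLinearMap ∘ₗ proj with hδ
  have hcoe : ∀ a : A, ((proj a : A)) = δ a • x := by
    intro a
    have h1 : e (δ a) = proj a := by
      rw [hδ]; exact e.apply_symm_apply _
    have h2 := congrArg (Subtype.val) h1
    rw [he, LinearEquiv.toSpanNonzeroSingleton_apply] at h2
    exact h2.symm
  have hδx : δ x = 1 := by
    have h1 : proj x = ⟨x, hxp⟩ :=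
      Submodule.projectionOnto_apply_left hc.symm ⟨x, hxp⟩
    have h2 : e 1 = ⟨x, hxp⟩ := by
      rw [he]; exact LinearEquiv.toSpanNonzeroSingleton_one R A x hx
    rw [hδ]
    show e.symm (proj x) = 1
    rw [h1, ← h2, e.symm_apply_apply]
  have hδB : ∀ a ∈ B, δ a = 0 := by
    intro a ha
    have h0 : proj a = 0 := (Submodule.projectionOnto_apply_eq_zero_iff hc.symm).2 ha
    rw [hδ]
    show e.symm (proj a) = 0
    rw [h0, map_zero]
  refine ⟨δ, hδx, hδB, fun a => ?_⟩
  have hmem : a - (proj a : A) ∈ B := by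
    rw [← Submodule.projectionOnto_apply_eq_zero_iff hc.symm (x := a - (proj a : A))]
    rw [map_sub]
    rw [Submodule.projectionOnto_apply_left hc.symm (proj a)]
    exact sub_self _
  calc φ a = φ ((a - (proj a : A)) + (proj a : A)) := by rw [sub_add_cancel]
    _ = φ (a - (proj a : A)) + φ (proj a : A) := map_add _ _ _
    _ = (a - (proj a : A)) + φ ((δ a) • x) := by rw [hfix _ hmem, hcoe]
    _ = (a - (δ a) • x) + (δ a) • (-x) := by rw [φ.map_smul, hneg, hcoe]
    _ = a - (2 * δ a) • x := by rw [two_mul, add_smul, smul_neg]; abel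

/-- The product of the two involutions in generic form. -/
theorem product_formula {R : Type*} [CommRing R] [IsDomain R] {A : Type*} [AddCommGroup A] [Module R A]
    [NoZeroSMulDivisors R A]
    (φ₁ φ₂ : A ≃ₗ[R] A)
    (B₁ B₂ : Submodule R A) (x₁ x₂ : A) (hx₁ : x₁ ≠ 0) (hx₂ : x₂ ≠ 0)
    (hc₁ : IsCompl B₁ (Submodule.span R {x₁})) (hc₂ : IsCompl B₂ (Submodule.span R {x₂}))
    (hfix₁ : ∀ a ∈ B₁, φ₁ a = a) (hfix₂ : ∀ a ∈ B₂, φ₂ a = a)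
    (hneg₁ : φ₁ x₁ = -x₁) (hneg₂ : φ₂ x₂ = -x₂)
    (hlines : Submodule.span R {x₁} = Submodule.span R ({x₂} : Set A)) :
    ∃ (δ₁ ρ : A →ₗ[R] R), δ₁ x₁ = 1 ∧ ρ x₁ = 0 ∧
      ∀ a, φ₂ (φ₁ a) = a + (2 * ρ a) • x₁ := by
  have hx2mem : x₂ ∈ Submodule.span R ({x₁} : Set A) := by
    rw [hlines]; exact Submodule.mem_span_singleton_self x₂
  obtain ⟨c, hc⟩ := Submodule.mem_span_singleton.1 hx2mem
  have hx1mem : x₁ ∈ Submodule.span R ({x₂} : Set A) := by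
    rw [← hlines]; exact Submodule.mem_span_singleton_self x₁
  obtain ⟨d, hd⟩ := Submodule.mem_span_singleton.1 hx1mem
  have hdc : d * c = 1 := by
    have h1 : (d * c) • x₁ = (1 : R) • x₁ := by rw [mul_smul, hc, hd, one_smul]
    exact smul_left_injective R hx₁ h1
  obtain ⟨δ₁, hδ₁x, hδ₁B, hform₁⟩ := involution_formula φ₁ B₁ x₁ hx₁ hc₁ hfix₁ hneg₁
  obtain ⟨δ₂, hδ₂x, hδ₂B, hform₂⟩ := involution_formula φ₂ B₂ x₂ hx₂ hc₂ hfix₂ hneg₂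
  set δ₂' : A →ₗ[R] R := c • δ₂ with hδ₂'def
  have hδ₂'a : ∀ a, δ₂' a = c * δ₂ a := fun a => by
    rw [hδ₂'def, LinearMap.smul_apply, smul_eq_mul]
  have hform₂' : ∀ a, φ₂ a = a - (2 * δ₂' a) • x₁ := by
    intro a
    rw [hform₂ a, ← hc, smul_smul, hδ₂'a a]
    congr 2
    ring
  have hδ₂'x₁ : δ₂' x₁ = 1 := by
    have hδ₂x₁ : δ₂ x₁ = d := by rw [← hd, map_smul, hδ₂x, smul_eq_mul, mul_one]
    rw [hδ₂'a, hδ₂x₁, mul_comm]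
    exact hdc
  set ρ : A →ₗ[R] R := δ₁ - δ₂' with hρdef
  have hρa : ∀ a, ρ a = δ₁ a - δ₂' a := fun a => by
    rw [hρdef, LinearMap.sub_apply]
  refine ⟨δ₁, ρ, hδ₁x, by rw [hρa, hδ₁x, hδ₂'x₁, sub_self], fun a => ?_⟩
  rw [hform₁ a, hform₂' (a - (2 * δ₁ a) • x₁)]
  have h3 : δ₂' (a - (2 * δ₁ a) • x₁) = δ₂' a - 2 * δ₁ a := by
    rw [map_sub, map_smul, hδ₂'x₁, smul_eq_mul, mul_one]
  rw [h3, hρa a]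
  calc a - (2 * δ₁ a) • x₁ - (2 * (δ₂' a - 2 * δ₁ a)) • x₁
      = a + ((-(2 * δ₁ a)) + (-(2 * (δ₂' a - 2 * δ₁ a)))) • x₁ := by
        rw [add_smul, neg_smul, neg_smul]; abel
    _ = a + (2 * (δ₁ a - δ₂' a)) • x₁ := by
        congr 2
        ring

theorem my_zero_smul {R : Type*} [CommRing R] {M : Type*} [AddCommGroup M] [Module R M]
    (k : R) (m : M) (h : k = 0) : k • m = 0 := by rw [h, zero_smul]

theorem my_add_mul_smul_zero {R : Type*} [CommRing R] {M : Type*} [AddCommGroup M] [Module R M]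
    (a x : M) (k : R) (h : k = 0) : a + (2 * k) • x = a := by
  rw [h, mul_zero, zero_smul, add_zero]

theorem mem_span_singleton_mul {R : Type*} [CommRing R] (a g : R) :
    a ∈ Submodule.span R {g} ↔ ∃ k, k * g = a :=
  Ideal.mem_span_singleton'

theorem zsmul_eq_msmul {M : Type*} [AddCommGroup M] [Module ℤ M] (k : ℤ) (v : M) :
    k • v = LinearMap.toSpanSingleton ℤ M v k := by
  rw [← Int.cast_smul_eq_zsmul ℤ k v, Int.cast_id, LinearMap.toSpanSingleton_apply]

theorem isCompl_span_ker {R : Type*} [CommRing R] [IsDomain R] {M : Type*} [AddCommGroup M]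
    [Module R M] (ρ : M →ₗ[R] R) (y : M) (hg : ρ y ≠ 0)
    (hgen : ∀ a, ∃ k : R, k * ρ y = ρ a) :
    IsCompl (Submodule.span R {y}) (LinearMap.ker ρ) := by
  constructor
  · rw [disjoint_iff]
    ext a
    simp only [Submodule.mem_inf, Submodule.mem_bot, Submodule.mem_span_singleton,
      LinearMap.mem_ker]
    constructor
    · rintro ⟨⟨k, rfl⟩, hk⟩
      rw [map_smul, smul_eq_mul] at hk
      rcases mul_eq_zero.1 hk with h | h
      · rw [h, zero_smul]
      · exact absurd h hg
    · rintro rfl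
      exact ⟨⟨0, zero_smul _ _⟩, map_zero _⟩
  · rw [codisjoint_iff, eq_top_iff]
    intro a _
    obtain ⟨k, hk⟩ := hgen a
    rw [Submodule.mem_sup]
    refine ⟨k • y, Submodule.smul_mem _ _ (Submodule.mem_span_singleton_self _),
      a - k • y, ?_, by abel⟩
    rw [LinearMap.mem_ker, map_sub, map_smul, smul_eq_mul, hk, sub_self]

theorem smul_congr_scalar {R : Type*} [CommRing R] {M : Type*} [AddCommGroup M] [Module R M]
    (a x : M) (k k' : R) (h : k = k') : a + k • x = a + k' • x := by rw [h]

/-- The product of two extremal involutions with distinct hyperplanes `B₁ ≠ B₂` but the same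
line `⟨x₁⟩ = ⟨x₂⟩` is a `2m`-transvection for some `m ≥ 1`, or the identity. -/
theorem stmt_13 (A : Type*) [AddCommGroup A] [Module ℤ A]
    (κ : Type*) (bA : Module.Basis κ ℤ A) (hκ : Infinite κ)
    (φ₁ φ₂ : A ≃ₗ[ℤ] A)
    (h₁ : ∀ a, φ₁ (φ₁ a) = a) (h₂ : ∀ a, φ₂ (φ₂ a) = a)
    (B₁ B₂ : Submodule ℤ A) (x₁ x₂ : A) (hx₁ : x₁ ≠ 0) (hx₂ : x₂ ≠ 0)
    (hc₁ : IsCompl B₁ (Submodule.span ℤ {x₁})) (hc₂ : IsCompl B₂ (Submodule.span ℤ {x₂}))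
    (hfix₁ : ∀ a ∈ B₁, φ₁ a = a) (hfix₂ : ∀ a ∈ B₂, φ₂ a = a)
    (hneg₁ : φ₁ x₁ = -x₁) (hneg₂ : φ₂ x₂ = -x₂)
    (hB : B₁ ≠ B₂)
    (hlines : Submodule.span ℤ {x₁} = Submodule.span ℤ ({x₂} : Set A)) :
    (∃ m : ℕ, 1 ≤ m ∧ IsTransvectionOfWeight (fun a => φ₂ (φ₁ a)) (2 * m)) ∨
      (∀ a : A, φ₂ (φ₁ a) = a) := by
  classical
  haveI := Module.Free.of_basis bA
  haveI := (fun {R M : Type _} [CommRing R] [IsDomain R] [AddCommGroup M] [Module R M] (b : Module.Basis κ R M) => (⟨fun h => b.smul_eq_zero.1 h⟩ : NoZeroSMulDivisors R M)) bA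
  obtain ⟨δ₁, ρ, hδ₁x, hρx₁, key⟩ :=
    product_formula φ₁ φ₂ B₁ B₂ x₁ x₂ hx₁ hx₂ hc₁ hc₂ hfix₁ hfix₂ hneg₁ hneg₂ hlines
  by_cases hρ0 : ρ = 0
  · right
    intro a
    rw [key a]
    exact my_add_mul_smul_zero a x₁ (ρ a) (by rw [hρ0]; rfl)
  · left
    haveI : (LinearMap.range ρ).IsPrincipal := IsPrincipalIdealRing.principal _
    set g := Submodule.IsPrincipal.generator (LinearMap.range ρ) with hgdef
    obtain ⟨y, hy⟩ := Submodule.IsPrincipal.generator_mem (LinearMap.range ρ)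
    have hspan : Submodule.span ℤ {g} = LinearMap.range ρ :=
      Submodule.IsPrincipal.span_singleton_generator _
    have hg0 : g ≠ 0 := by
      intro h0
      apply hρ0
      have hbot : LinearMap.range ρ = ⊥ := by
        rw [← hspan, h0, Submodule.span_zero_singleton]
      exact LinearMap.range_eq_bot.mp hbot
    set δ : A →ₗ[ℤ] ℤ := ρ + ρ with hδdef
    have hδa : ∀ a, δ a = 2 * ρ a := fun a => by
      rw [hδdef, LinearMap.add_apply, two_mul]
    have hkk : LinearMap.ker δ = LinearMap.ker ρ := by
      ext a
      simp only [LinearMap.mem_ker, hδa]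
      constructor
      · intro h
        rcases mul_eq_zero.1 h with h | h
        · norm_num at h
        · exact h
      · intro h; rw [h, mul_zero]
    refine ⟨g.natAbs, Int.natAbs_pos.mpr hg0, δ, x₁, y, ?_, ?_, ?_, ?_, ?_, ?_⟩
    · intro h0
      have hz : δ y = 0 := by rw [h0]; rfl
      rw [hδa, hy] at hz
      rcases mul_eq_zero.1 hz with h | h
      · norm_num at h
      · exact hg0 h
    · rw [LinearMap.mem_ker, hδa, hρx₁, mul_zero]
    · exact exists_basis_mem bA δ₁ x₁ hδ₁x
    · rw [hkk]
      refine isCompl_span_ker ρ y (by rw [hy]; exact hg0) (fun a => ?_)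
      have hmem : ρ a ∈ Submodule.span ℤ {g} := by
        rw [hspan]; exact ⟨a, rfl⟩
      obtain ⟨k, hk⟩ := (mem_span_singleton_mul (ρ a) g).1 hmem
      exact ⟨k, by rw [hy, hk]⟩
    · intro a
      exact (key a).trans (congrArg (fun v => a + v)
        (((LinearMap.toSpanSingleton_apply ℤ A x₁ (2 * ρ a)).symm.trans
          (congrArg (LinearMap.toSpanSingleton ℤ A x₁) (hδa a).symm)).trans
          (zsmul_eq_msmul (δ a) x₁).symm))
    · rw [hδa, hy, Int.natAbs_mul]
      rfl
end
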